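/- arXiv:2509.15070 — 2 statements merged into one kernel-verified Lean document; each statement's English description precedes it below -/
import Mathlib

section
/- Let G and F be groups and Ω a finite F-set, and form the wreath product G ≀_Ω F. For any element x = (g, f) of G ≀_Ω F, there exists an element y = (g', f) with the same F-component f such that x and y are conjugate in G ≀_Ω F and such that, for every orbit O of the action of the subgroup generated by f (Subgroup.zpowers f ≤ F) on Ω, there is at most one ω ∈ O with g' ω ≠ 1; i.e. for all ω₁, ω₂ in the same ⟨f⟩-orbit, if g' ω₁ ≠ 1 and g' ω₂ ≠ 1 then ω₁ = ω₂. (Discrete-group case of the paper's Lemma 'lem_wr_conjugate'.) -/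
/-!
Wreath products `G ≀_Ω F = (Ω → G) ⋊ F` with the coordinate-permutation action.
-/

namespace WreathFormalization

variable (G F Ω : Type*) [Group G] [Group F] [MulAction F Ω]

/-- The coordinate-permutation automorphism of `Ω → G` associated to `f : F`,
characterized by `(wreathAut G F Ω f g) ω = g (f⁻¹ • ω)`. -/
def wreathAut (f : F) : (Ω → G) ≃* (Ω → G) where
  toFun g ω := g (f⁻¹ • ω)
  invFun g ω := g (f • ω)
  left_inv g := by funext ω; simp
  right_inv g := by funext ω; simp
  map_mul' g h := rfl

/-- The coordinate-permutation action `φ : F →* MulAut (Ω → G)`. -/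
def wreathAction : F →* MulAut (Ω → G) where
  toFun := wreathAut G F Ω
  map_one' := MulEquiv.ext fun g => funext fun ω => by simp [wreathAut]
  map_mul' f₁ f₂ := MulEquiv.ext fun g => funext fun ω => by
    simp [wreathAut, MulAut.mul_apply, mul_smul]

/-- The wreath product `G ≀_Ω F`. -/
abbrev WreathProduct := (Ω → G) ⋊[wreathAction G F Ω] F

/-!
Conjugating `(g, f)` by a base element `(h, 1)` replaces `g` by
`ω ↦ h ω * g ω * (h (f⁻¹ • ω))⁻¹`. Choose a representative `r` of each `⟨f⟩`-orbit and write each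
point as `f ^ k • r` with `k` minimal. Taking `h (f ^ k • r) = g (f • r)⁻¹ * ⋯ * g (f ^ k • r)⁻¹`
gives `h ω = h (f⁻¹ • ω) * (g ω)⁻¹` at every point other than a representative, so the new
coordinates are trivial off the representatives.
-/

variable {G F Ω}

open MulAction Subgroup

theorem isConj_mk_mul_mul_inv_smul (g h : Ω → G) (f : F) :
    IsConj (⟨g, f⟩ : WreathProduct G F Ω) ⟨fun ω => h ω * g ω * (h (f⁻¹ • ω))⁻¹, f⟩ := by
  refine isConj_iff.2 ⟨⟨h, 1⟩, mul_inv_eq_of_eq_mul ?_⟩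
  ext ω
  · show h ω * wreathAction G F Ω 1 g ω = h ω * g ω * (h (f⁻¹ • ω))⁻¹ * wreathAction G F Ω f h ω
    simp [wreathAction, wreathAut]
  · simp [-SemidirectProduct.mk_eq_inl_mul_inr]

theorem exists_pow_smul_eq_of_mem_orbit_zpowers {f : F} {ω ω' : Ω}
    [Finite (orbit (zpowers f) ω)] (h : ω' ∈ orbit (zpowers f) ω) :
    ∃ n : ℕ, f ^ n • ω = ω' := by
  obtain ⟨⟨_, k, rfl⟩, rfl⟩ := h
  have hpos : (Function.minimalPeriod (f • ·) ω : ℤ) ≠ 0 := Int.natCast_ne_zero.2 (NeZero.ne _)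
  refine ⟨(k % Function.minimalPeriod (f • ·) ω).toNat, ?_⟩
  rw [← zpow_natCast, Int.toNat_of_nonneg (Int.emod_nonneg _ hpos), zpow_smul_mod_minimalPeriod]
  rfl

noncomputable def orbitRep (f : F) (ω : Ω) : Ω :=
  (⟦ω⟧ : orbitRel.Quotient (zpowers f) Ω).out

theorem orbitRep_eq_of_mem_orbit {f : F} {ω₁ ω₂ : Ω} (h : ω₁ ∈ orbit (zpowers f) ω₂) :
    orbitRep f ω₁ = orbitRep f ω₂ := by
  rw [orbitRep, orbitRep, Quotient.sound h]

theorem orbitRep_inv_smul (f : F) (ω : Ω) : orbitRep f (f⁻¹ • ω) = orbitRep f ω :=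
  orbitRep_eq_of_mem_orbit ⟨⟨f, mem_zpowers f⟩⁻¹, rfl⟩

theorem mem_orbit_orbitRep (f : F) (ω : Ω) : ω ∈ orbit (zpowers f) (orbitRep f ω) :=
  orbitRel_apply.1 (Quotient.exact (Quotient.out_eq _).symm)

noncomputable def orbitIndex (f : F) (ω : Ω) : ℕ :=
  sInf {n : ℕ | f ^ n • orbitRep f ω = ω}

theorem pow_orbitIndex_smul_orbitRep [Finite Ω] (f : F) (ω : Ω) :
    f ^ orbitIndex f ω • orbitRep f ω = ω :=
  Nat.sInf_mem (exists_pow_smul_eq_of_mem_orbit_zpowers (mem_orbit_orbitRep f ω))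

theorem orbitIndex_le {f : F} {ω : Ω} {n : ℕ} (h : f ^ n • orbitRep f ω = ω) :
    orbitIndex f ω ≤ n :=
  Nat.sInf_le h

theorem orbitIndex_eq_succ_of_ne_orbitRep [Finite Ω] {f : F} {ω : Ω} (h : ω ≠ orbitRep f ω) :
    orbitIndex f ω = orbitIndex f (f⁻¹ • ω) + 1 := by
  have hprev := pow_orbitIndex_smul_orbitRep f (f⁻¹ • ω)
  rw [orbitRep_inv_smul] at hprev
  obtain ⟨k, hk⟩ := Nat.exists_eq_add_one_of_ne_zero fun h0 : orbitIndex f ω = 0 =>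
    h (by simpa [h0] using (pow_orbitIndex_smul_orbitRep f ω).symm)
  have hk' : f ^ k • orbitRep f ω = f⁻¹ • ω := by
    rw [eq_inv_smul_iff, ← mul_smul, ← pow_succ', ← hk, pow_orbitIndex_smul_orbitRep]
  have hle : orbitIndex f (f⁻¹ • ω) ≤ k := orbitIndex_le (by rwa [orbitRep_inv_smul])
  have hge : orbitIndex f ω ≤ orbitIndex f (f⁻¹ • ω) + 1 :=
    orbitIndex_le (by rw [pow_succ', mul_smul, hprev, smul_inv_smul])
  omega

noncomputable def orbitConjugator (g : Ω → G) (f : F) (ω : Ω) : G :=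
  ((List.range (orbitIndex f ω)).map fun j => (g (f ^ (j + 1) • orbitRep f ω))⁻¹).prod

theorem orbitConjugator_eq_of_ne_orbitRep [Finite Ω] (g : Ω → G) {f : F} {ω : Ω}
    (h : ω ≠ orbitRep f ω) :
    orbitConjugator g f ω = orbitConjugator g f (f⁻¹ • ω) * (g ω)⁻¹ := by
  have hω := pow_orbitIndex_smul_orbitRep f ω
  rw [orbitIndex_eq_succ_of_ne_orbitRep h] at hω
  rw [orbitConjugator, orbitIndex_eq_succ_of_ne_orbitRep h, List.prod_range_succ, hω,
    orbitConjugator, orbitRep_inv_smul]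

theorem conj_orbitConjugator_eq_one [Finite Ω] (g : Ω → G) {f : F} {ω : Ω}
    (h : ω ≠ orbitRep f ω) :
    orbitConjugator g f ω * g ω * (orbitConjugator g f (f⁻¹ • ω))⁻¹ = 1 := by
  rw [orbitConjugator_eq_of_ne_orbitRep g h]
  group

/-- Any element `(g, f)` of `G ≀_Ω F` (with `Ω` a finite `F`-set) is conjugate to an element
`(g', f)` with the same `F`-component such that `g'` has at most one nontrivial value in each
orbit of `⟨f⟩ = Subgroup.zpowers f` on `Ω`. -/
theorem exists_conj_one_nontrivial_coordinate_per_orbit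
    {G F : Type*} [Group G] [Group F] {Ω : Type*} [Finite Ω] [MulAction F Ω]
    (g : Ω → G) (f : F) :
    ∃ g' : Ω → G,
      IsConj (⟨g, f⟩ : WreathProduct G F Ω) (⟨g', f⟩ : WreathProduct G F Ω) ∧
      ∀ ω₁ ω₂ : Ω, ω₁ ∈ MulAction.orbit (Subgroup.zpowers f) ω₂ →
        g' ω₁ ≠ 1 → g' ω₂ ≠ 1 → ω₁ = ω₂ := by
  set h := orbitConjugator g f
  refine ⟨fun ω => h ω * g ω * (h (f⁻¹ • ω))⁻¹, isConj_mk_mul_mul_inv_smul g h f, ?_⟩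
  intro ω₁ ω₂ horb h₁ h₂
  have eq_orbitRep {ω : Ω} : h ω * g ω * (h (f⁻¹ • ω))⁻¹ ≠ 1 → ω = orbitRep f ω :=
    not_imp_comm.1 (conj_orbitConjugator_eq_one g)
  calc ω₁ = orbitRep f ω₁ := eq_orbitRep h₁
    _ = orbitRep f ω₂ := orbitRep_eq_of_mem_orbit horb
    _ = ω₂ := (eq_orbitRep h₂).symm

end WreathFormalization
end

section
/- Let Ω be a finite set and, for S ⊆ Ω, let F_S = {t : Ω → [0,1] | t ω = 1 for all ω ∉ S} ⊆ [0,1]^Ω, and for j : ℕ let Y_j = ⋃_{S ⊆ Ω, |S| = j} F_S. Fix j with j < |Ω|, let A be a C*-algebra (with its canonical star order), and let f : Y_j → A be a continuous function that vanishes on Y_{j-1} when j ≥ 1. Define f̃ on Y_{j+1} as follows: for t ∈ F_S with |S| = j+1, let m = max_{s ∈ S} t s; if m = 0 set f̃ t = 0, and otherwise set f̃ t = m • f (r_S t), where (r_S t) s = (t s) / m for s ∈ S and (r_S t) ω = 1 for ω ∉ S (note r_S t ∈ Y_j). Then: (i) the value f̃ t does not depend on the choice of S with |S| = j+1 and t ∈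 F_S, so f̃ : Y_{j+1} → A is well-defined; (ii) f̃ is continuous; (iii) f̃ agrees with f on Y_j ⊆ Y_{j+1}; (iv) ‖f̃ t‖ ≤ sup_{y ∈ Y_j} ‖f y‖ for every t ∈ Y_{j+1}; (v) if f y ≥ 0 for all y ∈ Y_j, then f̃ t ≥ 0 for all t ∈ Y_{j+1}. (The homogeneous extension construction in the proof of the paper's Proposition 'prop_admissible_cylinder'.) -/
/-!
On a face `F_S` with `|S| = j + 1` the extension is `t ↦ m • f (r_S t)` with `m = max_S t`;
if `t s = m` then `r_S t` lies on the face `F_{S \ {s}}`, hence in `Y_j`. It is well defined: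
a point on two distinct such faces `F_S`, `F_{S'}` has a coordinate equal to `1` in `S \ S'`,
so `m = 1` and `r_S t = t` for both; the same argument gives agreement with `f` on `Y_j`.
On each face the extension is continuous where `m > 0` because `f` and `r_S` are, and where
`m = 0` because `f` is bounded on the compact set `Y_j`; the finitely many closed faces then
glue. The norm bound and positivity follow from `0 ≤ m ≤ 1`.
-/

namespace HomogeneousExtension

variable (Ω : Type*) [Fintype Ω] [DecidableEq Ω]

/-- The face `F_S ⊆ [0,1]^Ω` through the vertex with all coordinates `1`:
points of the cube whose coordinates off `S` are all equal to `1`. -/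
def face (S : Finset Ω) : Set (Ω → ℝ) :=
  {t | (∀ ω, t ω ∈ Set.Icc (0 : ℝ) 1) ∧ ∀ ω ∉ S, t ω = 1}

/-- The skeleton `Y_j = ⋃_{S ⊆ Ω, |S| = j} F_S`. -/
def skeleton (j : ℕ) : Set (Ω → ℝ) :=
  {t | ∃ S : Finset Ω, S.card = j ∧ t ∈ face Ω S}

/-- The rescaled point `r_S t`: `(r_S t) s = t s / m` for `s ∈ S`, and `(r_S t) ω = 1`
for `ω ∉ S`. -/
noncomputable def rescale (S : Finset Ω) (m : ℝ) (t : Ω → ℝ) : Ω → ℝ :=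
  fun ω => if ω ∈ S then t ω / m else 1

end HomogeneousExtension

open Filter Topology

lemma continuousOn_smul_of_norm_le {X E : Type*} [TopologicalSpace X] [NormedAddCommGroup E]
    [NormedSpace ℝ E] {s : Set X} {m : X → ℝ} {g : X → E} {C : ℝ} (hm : ContinuousOn m s)
    (hg : ContinuousOn g (s ∩ {x | m x ≠ 0})) (hgC : ∀ x ∈ s, ‖g x‖ ≤ C) :
    ContinuousOn (fun x => m x • g x) s := by
  intro x hx
  by_cases hmx : m x = 0
  · have hbound := (hm x hx).norm.mul_const C
    rw [ContinuousWithinAt, hmx, norm_zero, zero_mul] at hbound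
    rw [ContinuousWithinAt, hmx, zero_smul]
    refine squeeze_zero_norm' ?_ hbound
    filter_upwards [self_mem_nhdsWithin] with y hy
    rw [norm_smul]
    exact mul_le_mul_of_nonneg_left (hgC y hy) (norm_nonneg _)
  · have hnhds : s ∩ {x | m x ≠ 0} ∈ 𝓝[s] x :=
      inter_mem self_mem_nhdsWithin ((hm x hx).eventually_ne hmx)
    exact (hm x hx).smul ((hg x ⟨hx, hmx⟩).mono_of_mem_nhdsWithin hnhds)

lemma continuousOn_extend_subtype_val {X Y : Type*} [TopologicalSpace X] [TopologicalSpace Y]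
    {s : Set X} {f : s → Y} (hf : Continuous f) (e : X → Y) :
    ContinuousOn (Function.extend Subtype.val f e) s := by
  rw [continuousOn_iff_continuous_domRestrict]
  convert hf
  exact funext fun x => Subtype.val_injective.extend_apply f e x

lemma norm_extend_le_iSup {α β E : Type*} [SeminormedAddCommGroup E] {g : α → β} {f : α → E}
    (hf : BddAbove (Set.range fun a => ‖f a‖)) (b : β) :
    ‖Function.extend g f 0 b‖ ≤ ⨆ a, ‖f a‖ := by
  classical
  by_cases hb : ∃ a, g a = b
  · rw [Function.extend_def, dif_pos hb]
    exact le_ciSup hf _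
  · rw [Function.extend_apply' _ _ _ hb, Pi.zero_apply, norm_zero]
    exact Real.iSup_nonneg fun _ => norm_nonneg _

namespace HomogeneousExtension

variable {Ω : Type*}

lemma isClosed_face (S : Finset Ω) : IsClosed (face Ω S) := by
  simp only [face, Set.ofPred_and, Set.ofPred_forall]
  exact (isClosed_iInter fun ω => isClosed_Icc.preimage (continuous_apply ω)).inter
    (isClosed_iInter fun ω => isClosed_iInter fun _ => isClosed_eq (continuous_apply ω)
      continuous_const)

lemma isCompact_face (S : Finset Ω) : IsCompact (face Ω S) :=
  (isCompact_univ_pi fun _ => isCompact_Icc).of_isClosed_subset (isClosed_face S)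
    fun _ ht ω _ => ht.1 ω

lemma skeleton_eq_iUnion (j : ℕ) :
    skeleton Ω j = ⋃ S : {S : Finset Ω // S.card = j}, face Ω S := by
  ext
  simp [skeleton]

lemma isCompact_skeleton [Finite Ω] (j : ℕ) : IsCompact (skeleton Ω j) := by
  rw [skeleton_eq_iUnion]
  exact isCompact_iUnion fun S => isCompact_face S.1

lemma bddAbove_range_norm [Finite Ω] {E : Type*} [SeminormedAddCommGroup E] {j : ℕ}
    {f : skeleton Ω j → E} (hf : Continuous f) : BddAbove (Set.range fun y => ‖f y‖) :=
  have := isCompact_iff_compactSpace.mp (isCompact_skeleton (Ω := Ω) j)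
  (isCompact_range hf.norm).bddAbove

noncomputable def faceMax (S : Finset Ω) (t : Ω → ℝ) : ℝ := sSup (t '' S)

section Face

variable {S S' : Finset Ω} {t : Ω → ℝ} {m : ℝ}

lemma isGreatest_faceMax (hS : S.Nonempty) (t : Ω → ℝ) : IsGreatest (t '' S) (faceMax S t) :=
  have hfin : (t '' S).Finite := S.finite_toSet.image t
  ⟨(hS.to_set.image t).csSup_mem hfin, fun _ hx => le_csSup hfin.bddAbove hx⟩

lemma continuous_faceMax (hS : S.Nonempty) : Continuous (faceMax S) := by
  have : faceMax S = fun t => S.sup' hS t := funext fun t => (S.sup'_eq_csSup_image hS t).symm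
  rw [this]
  exact Continuous.finset_sup'_apply hS fun s _ => continuous_apply s

lemma exists_isGreatest_of_mem_skeleton {j : ℕ} {t : Ω → ℝ} (ht : t ∈ skeleton Ω (j + 1)) :
    ∃ S : Finset Ω, S.card = j + 1 ∧ t ∈ face Ω S ∧ IsGreatest (t '' S) (faceMax S t) := by
  obtain ⟨S, hS, htS⟩ := ht
  exact ⟨S, hS, htS, isGreatest_faceMax (Finset.card_pos.mp (by omega)) t⟩

lemma mem_Icc_of_isGreatest (ht : t ∈ face Ω S) (hm : IsGreatest (t '' S) m) :
    m ∈ Set.Icc 0 1 := by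
  obtain ⟨s, -, rfl⟩ := hm.1
  exact ht.1 s

lemma eq_one_of_isGreatest_of_not_subset (ht : t ∈ face Ω S) (ht' : t ∈ face Ω S')
    (hSS' : ¬ S ⊆ S') (hm : IsGreatest (t '' S) m) : m = 1 := by
  obtain ⟨s, hs, hs'⟩ := Finset.not_subset.mp hSS'
  exact le_antisymm (mem_Icc_of_isGreatest ht hm).2 (ht'.2 s hs' ▸ hm.2 ⟨s, hs, rfl⟩)

variable [DecidableEq Ω]

lemma rescale_one_of_mem_face (ht : t ∈ face Ω S) : rescale Ω S 1 t = t := by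
  funext ω
  by_cases hω : ω ∈ S <;> simp [rescale, hω, ht.2 ω]

lemma rescale_mem_skeleton {j : ℕ} (hS : S.card = j + 1) (ht : t ∈ face Ω S)
    (hm : IsGreatest (t '' S) m) (hm0 : m ≠ 0) : rescale Ω S m t ∈ skeleton Ω j := by
  have hmpos : 0 < m := (mem_Icc_of_isGreatest ht hm).1.lt_of_ne' hm0
  obtain ⟨s, hs, hts⟩ := hm.1
  refine ⟨S.erase s, by rw [Finset.card_erase_of_mem hs, hS]; rfl, fun ω => ?_, fun ω hω => ?_⟩
  · by_cases hωS : ω ∈ S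
    · simp only [rescale, if_pos hωS]
      exact ⟨div_nonneg (ht.1 ω).1 hmpos.le, div_le_one_of_le₀ (hm.2 ⟨ω, hωS, rfl⟩) hmpos.le⟩
    · simp only [rescale, if_neg hωS]
      exact ⟨zero_le_one, le_rfl⟩
  · by_cases hωS : ω ∈ S
    · obtain rfl : ω = s := by simpa [hωS] using hω
      simp only [rescale, if_pos hωS, hts, div_self hm0]
    · simp only [rescale, if_neg hωS]

lemma continuousOn_rescale (S : Finset Ω) {m : (Ω → ℝ) → ℝ} {s : Set (Ω → ℝ)}
    (hm : ContinuousOn m s) (hm0 : ∀ t ∈ s, m t ≠ 0) :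
    ContinuousOn (fun t => rescale Ω S (m t) t) s :=
  continuousOn_pi.mpr fun ω => by
    by_cases hω : ω ∈ S
    · simp only [rescale, if_pos hω]
      exact (continuous_apply ω).continuousOn.div hm hm0
    · simp only [rescale, if_neg hω]
      exact continuousOn_const

end Face

section HomogeneousValue

variable [DecidableEq Ω] {E : Type*} [NormedAddCommGroup E] [NormedSpace ℝ E] {j : ℕ}
  (f : skeleton Ω j → E) {S S' : Finset Ω} {t : Ω → ℝ} {m m' : ℝ}

-- Off `Y_j` the extension by zero is never seen: `r_S t ∈ Y_j` whenever `m ≠ 0`.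
noncomputable def homogeneousValue (S : Finset Ω) (m : ℝ) (t : Ω → ℝ) : E :=
  m • Function.extend Subtype.val f 0 (rescale Ω S m t)

lemma homogeneousValue_one (ht : t ∈ face Ω S) :
    homogeneousValue f S 1 t = Function.extend Subtype.val f 0 t := by
  rw [homogeneousValue, rescale_one_of_mem_face ht, one_smul]

lemma homogeneousValue_eq_of_card_eq (hcard : S.card = S'.card) (ht : t ∈ face Ω S)
    (ht' : t ∈ face Ω S') (hm : IsGreatest (t '' S) m) (hm' : IsGreatest (t '' S') m') :
    homogeneousValue f S m t = homogeneousValue f S' m' t := by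
  rcases eq_or_ne S S' with rfl | hSS'
  · rw [hm.unique hm']
  · have h₁ : ¬ S ⊆ S' := fun h => hSS' (Finset.eq_of_subset_of_card_le h hcard.ge)
    have h₂ : ¬ S' ⊆ S := fun h => hSS' (Finset.eq_of_subset_of_card_le h hcard.le).symm
    rw [eq_one_of_isGreatest_of_not_subset ht ht' h₁ hm,
      eq_one_of_isGreatest_of_not_subset ht' ht h₂ hm', homogeneousValue_one f ht,
      homogeneousValue_one f ht']

lemma homogeneousValue_eq_of_mem_skeleton (hS : S.card = j + 1) (ht : t ∈ face Ω S)
    (hm : IsGreatest (t '' S) m) (htj : t ∈ skeleton Ω j) :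
    homogeneousValue f S m t = f ⟨t, htj⟩ := by
  obtain ⟨S', hS', ht'⟩ := id htj
  have hSS' : ¬ S ⊆ S' := fun h => by simpa [hS, hS'] using Finset.card_le_card h
  rw [eq_one_of_isGreatest_of_not_subset ht ht' hSS' hm, homogeneousValue_one f ht]
  exact Subtype.val_injective.extend_apply f 0 ⟨t, htj⟩

lemma homogeneousValue_eq_of_ne_zero (hS : S.card = j + 1) (ht : t ∈ face Ω S)
    (hm : IsGreatest (t '' S) m) (hm0 : m ≠ 0) :
    homogeneousValue f S m t = m • f ⟨rescale Ω S m t, rescale_mem_skeleton hS ht hm hm0⟩ :=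
  congrArg (m • ·) <|
    Subtype.val_injective.extend_apply f 0 ⟨_, rescale_mem_skeleton hS ht hm hm0⟩

lemma norm_homogeneousValue_le (hf : BddAbove (Set.range fun y => ‖f y‖))
    (hm : m ∈ Set.Icc 0 1) : ‖homogeneousValue f S m t‖ ≤ ⨆ y, ‖f y‖ := by
  rw [homogeneousValue, norm_smul, Real.norm_of_nonneg hm.1]
  exact (mul_le_mul_of_nonneg_left (norm_extend_le_iSup hf _) hm.1).trans
    (mul_le_of_le_one_left (Real.iSup_nonneg fun _ => norm_nonneg _) hm.2)

lemma homogeneousValue_nonneg [PartialOrder E] [PosSMulMono ℝ E] (hf : ∀ y, 0 ≤ f y)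
    (hm : 0 ≤ m) : 0 ≤ homogeneousValue f S m t := by
  classical
  refine smul_nonneg hm ?_
  by_cases hr : ∃ y : skeleton Ω j, (y : Ω → ℝ) = rescale Ω S m t
  · rw [Function.extend_def, dif_pos hr]
    exact hf _
  · rw [Function.extend_apply' _ _ _ hr]
    exact le_rfl

lemma continuousOn_homogeneousValue_faceMax (hf : Continuous f)
    (hbdd : BddAbove (Set.range fun y => ‖f y‖)) (hS : S.card = j + 1) :
    ContinuousOn (fun t => homogeneousValue f S (faceMax S t) t) (face Ω S) := by
  have hne : S.Nonempty := Finset.card_pos.mp (by omega)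
  have hmax := continuous_faceMax hne
  refine continuousOn_smul_of_norm_le hmax.continuousOn ?_ fun t _ => norm_extend_le_iSup hbdd _
  exact (continuousOn_extend_subtype_val hf 0).comp
    (continuousOn_rescale S hmax.continuousOn fun t ht => ht.2)
    fun t ht => rescale_mem_skeleton hS ht.1 (isGreatest_faceMax hne t) ht.2

end HomogeneousValue

section SkeletonExtension

variable [DecidableEq Ω] {E : Type*} [NormedAddCommGroup E] [NormedSpace ℝ E] {j : ℕ}
  (f : skeleton Ω j → E)

-- The face through `x` is chosen arbitrarily; `homogeneousValue_eq_of_card_eq` makes the choice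
-- irrelevant.
noncomputable def skeletonExtension (x : skeleton Ω (j + 1)) : E :=
  homogeneousValue f x.2.choose (faceMax x.2.choose x) x

lemma skeletonExtension_eq {x : skeleton Ω (j + 1)} {S : Finset Ω} {m : ℝ} (hS : S.card = j + 1)
    (hx : (x : Ω → ℝ) ∈ face Ω S) (hm : IsGreatest ((x : Ω → ℝ) '' S) m) :
    skeletonExtension f x = homogeneousValue f S m x := by
  obtain ⟨hS₀, hx₀⟩ := x.2.choose_spec
  exact homogeneousValue_eq_of_card_eq f (hS₀.trans hS.symm) hx₀ hx
    (isGreatest_faceMax (Finset.card_pos.mp (by omega)) _) hm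

lemma skeletonExtension_eq_of_mem_skeleton (x : skeleton Ω (j + 1))
    (hx : (x : Ω → ℝ) ∈ skeleton Ω j) : skeletonExtension f x = f ⟨x, hx⟩ := by
  obtain ⟨S, hS, hxS, hm⟩ := exists_isGreatest_of_mem_skeleton x.2
  rw [skeletonExtension_eq f hS hxS hm, homogeneousValue_eq_of_mem_skeleton f hS hxS hm hx]

lemma norm_skeletonExtension_le (hf : BddAbove (Set.range fun y => ‖f y‖))
    (x : skeleton Ω (j + 1)) : ‖skeletonExtension f x‖ ≤ ⨆ y, ‖f y‖ := by
  obtain ⟨S, hS, hxS, hm⟩ := exists_isGreatest_of_mem_skeleton x.2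
  rw [skeletonExtension_eq f hS hxS hm]
  exact norm_homogeneousValue_le f hf (mem_Icc_of_isGreatest hxS hm)

lemma skeletonExtension_nonneg [PartialOrder E] [PosSMulMono ℝ E] (hf : ∀ y, 0 ≤ f y)
    (x : skeleton Ω (j + 1)) : 0 ≤ skeletonExtension f x := by
  obtain ⟨S, hS, hxS, hm⟩ := exists_isGreatest_of_mem_skeleton x.2
  rw [skeletonExtension_eq f hS hxS hm]
  exact homogeneousValue_nonneg f hf (mem_Icc_of_isGreatest hxS hm).1

lemma continuous_skeletonExtension [Finite Ω] (hf : Continuous f) :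
    Continuous (skeletonExtension f) := by
  refine (locallyFinite_of_finite fun S : {S : Finset Ω // S.card = j + 1} =>
      ((↑) : skeleton Ω (j + 1) → Ω → ℝ) ⁻¹' face Ω S).continuous ?_
    (fun S => (isClosed_face S.1).preimage continuous_subtype_val) fun S => ?_
  · rw [← Set.preimage_iUnion, ← skeleton_eq_iUnion, Subtype.coe_preimage_self]
  · have hne : S.1.Nonempty := Finset.card_pos.mp (by omega)
    exact ((continuousOn_homogeneousValue_faceMax f hf (bddAbove_range_norm hf) S.2).comp
      continuous_subtype_val.continuousOn fun _ hx => hx).congr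
      fun x hx => skeletonExtension_eq f S.2 hx (isGreatest_faceMax hne _)

end SkeletonExtension

theorem exists_homogeneous_extension_general
    {Ω : Type*} [Fintype Ω] [DecidableEq Ω]
    {A : Type*} [NonUnitalCStarAlgebra A] [PartialOrder A] [StarOrderedRing A]
    (j : ℕ)
    (f : skeleton Ω j → A) (hf : Continuous f) :
    ∃ ftilde : skeleton Ω (j + 1) → A,
      (∀ (S : Finset Ω) (hS : S.card = j + 1) (t : Ω → ℝ) (ht : t ∈ face Ω S)
          (m : ℝ) (hm : IsGreatest ((fun s => t s) '' (S : Set Ω)) m),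
        (m = 0 → ftilde ⟨t, S, hS, ht⟩ = 0) ∧
        (m ≠ 0 → ∃ hr : rescale Ω S m t ∈ skeleton Ω j,
          ftilde ⟨t, S, hS, ht⟩ = m • f ⟨rescale Ω S m t, hr⟩)) ∧
      Continuous ftilde ∧
      (∀ (t : Ω → ℝ) (ht : t ∈ skeleton Ω j) (ht' : t ∈ skeleton Ω (j + 1)),
        ftilde ⟨t, ht'⟩ = f ⟨t, ht⟩) ∧
      (∀ t : skeleton Ω (j + 1), ‖ftilde t‖ ≤ ⨆ y : skeleton Ω j, ‖f y‖) ∧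
      ((∀ y : skeleton Ω j, 0 ≤ f y) → ∀ t : skeleton Ω (j + 1), 0 ≤ ftilde t) := by
  refine ⟨skeletonExtension f, fun S hS t ht m hm => ⟨fun hm0 => ?_, fun hm0 => ?_⟩,
    continuous_skeletonExtension f hf,
    fun t ht ht' => skeletonExtension_eq_of_mem_skeleton f ⟨t, ht'⟩ ht,
    norm_skeletonExtension_le f (bddAbove_range_norm hf), skeletonExtension_nonneg f⟩
  · rw [skeletonExtension_eq f hS ht hm, homogeneousValue, hm0, zero_smul]
  · exact ⟨rescale_mem_skeleton hS ht hm hm0, (skeletonExtension_eq f hS ht hm).trans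
      (homogeneousValue_eq_of_ne_zero f hS ht hm hm0)⟩

/-- Let `f` be a continuous function on the skeleton `Y_j` (`j < |Ω|`), with values in a
C*-algebra `A`, vanishing on `Y_{j-1}` when `j ≥ 1`.  Then there is a (necessarily unique,
i.e. well-defined) function `f̃` on `Y_{j+1}` such that for every `S` with `|S| = j + 1`
and every `t ∈ F_S`, writing `m = max_{s ∈ S} t s`, one has `f̃ t = 0` if `m = 0` and
`f̃ t = m • f (r_S t)` (with `r_S t ∈ Y_j`) if `m ≠ 0`.  Moreover `f̃` is continuous,
agrees with `f` on `Y_j`, satisfies `‖f̃ t‖ ≤ sup_{y ∈ Y_j} ‖f y‖`, and is positive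
whenever `f` is. -/
theorem exists_homogeneous_extension
    {Ω : Type*} [Fintype Ω] [DecidableEq Ω]
    {A : Type*} [NonUnitalCStarAlgebra A] [PartialOrder A] [StarOrderedRing A]
    (j : ℕ) (hj : j < Fintype.card Ω)
    (f : skeleton Ω j → A) (hf : Continuous f)
    (hvanish : ∀ t : skeleton Ω j, 1 ≤ j → (t : Ω → ℝ) ∈ skeleton Ω (j - 1) → f t = 0) :
    ∃ ftilde : skeleton Ω (j + 1) → A,
      (∀ (S : Finset Ω) (hS : S.card = j + 1) (t : Ω → ℝ) (ht : t ∈ face Ω S)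
          (m : ℝ) (hm : IsGreatest ((fun s => t s) '' (S : Set Ω)) m),
        (m = 0 → ftilde ⟨t, S, hS, ht⟩ = 0) ∧
        (m ≠ 0 → ∃ hr : rescale Ω S m t ∈ skeleton Ω j,
          ftilde ⟨t, S, hS, ht⟩ = m • f ⟨rescale Ω S m t, hr⟩)) ∧
      Continuous ftilde ∧
      (∀ (t : Ω → ℝ) (ht : t ∈ skeleton Ω j) (ht' : t ∈ skeleton Ω (j + 1)),
        ftilde ⟨t, ht'⟩ = f ⟨t, ht⟩) ∧
      (∀ t : skeleton Ω (j + 1), ‖ftilde t‖ ≤ ⨆ y : skeleton Ω j, ‖f y‖) ∧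
      ((∀ y : skeleton Ω j, 0 ≤ f y) → ∀ t : skeleton Ω (j + 1), 0 ≤ ftilde t) :=
  exists_homogeneous_extension_general j f hf

end HomogeneousExtension
end
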